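/- arXiv:2009.05973 — 2 statements merged into one kernel-verified Lean document; each statement's English description precedes it below -/
import Mathlib

section
/- Let ρ and τ be words on distinct integers with standardizations that are ballot permutations, such that the concatenation ρτ is a permutation of {1,…,n}, with ρ of length l ≥ 1 and τ nonempty with first letters ρ₁ > τ₁. Then in π = ρʳτ (the reversal of ρ followed by τ), the position l+1 is the first lowest position of π. -/
open scoped Classical

/-- Number of descents of a word. -/
def descents (l : List ℤ) : ℕ := ((l.zip l.tail).filter (fun p => decide (p.2 < p.1))).length

/-- Number of ascents of a word. -/
def ascents (l : List ℤ) : ℕ := ((l.zip l.tail).filter (fun p => decide (p.1 < p.2))).length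

/-- Height of a word: ascents minus descents. -/
def ht (l : List ℤ) : ℤ := (ascents l : ℤ) - (descents l : ℤ)

/-- A word is ballot if every prefix has nonnegative height. -/
def IsBallot (l : List ℤ) : Prop := ∀ k : ℕ, 0 ≤ ht (l.take k)

/-- Depth: negative of the minimum height over nonempty prefixes (0 for the empty word;
note every word of length ≥ 1 has a prefix of height 0, so folding with 0 is harmless). -/
def depth (l : List ℤ) : ℤ :=
  -(((List.range l.length).map (fun i => ht (l.take (i + 1)))).foldr min 0)

/-- Number of peaks of a word. -/
def peaks (l : List ℤ) : ℕ :=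
  ((l.zip (l.tail.zip l.tail.tail)).filter
    (fun p => decide (p.1 < p.2.1 ∧ p.2.2 < p.2.1))).length

/-- The list [1, 2, ..., n] as integers. -/
def baseList (n : ℕ) : List ℤ := (List.range n).map (fun i => (i : ℤ) + 1)

/-- The one-line word of a permutation of {1,…,n}. -/
def permList {n : ℕ} (σ : Equiv.Perm (Fin n)) : List ℤ :=
  List.ofFn (fun i => ((σ i : ℕ) : ℤ) + 1)

/-- Standardization of a word on distinct integers. -/
def stdz (l : List ℤ) : List ℤ :=
  l.map (fun x => ((l.filter (fun y => decide (y < x))).length : ℤ) + 1)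

/-!
Write `h` for the height. Height is additive over two words glued at a shared letter and changes
sign under reversal, and standardization preserves the heights of all prefixes. Hence a prefix of
`π = ρʳτ` of length `i ≤ l` has height `h(ρ₁⋯ρ_{l-i+1}) - h(ρ) ≥ -h(ρ)`, while the prefix of length
`l + j` has height `h(τ₁⋯τⱼ) - h(τ₁ρ) = h(τ₁⋯τⱼ) - 1 - h(ρ) ≥ -1 - h(ρ)`, with equality at `j = 1`.
-/

@[simp]
lemma ht_nil : ht [] = 0 := by
  simp [ht, ascents, descents]

@[simp]
lemma ht_singleton (a : ℤ) : ht [a] = 0 := by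
  simp [ht, ascents, descents]

lemma ht_cons_cons (a b : ℤ) (t : List ℤ) : ht (a :: b :: t) = (b - a).sign + ht (b :: t) := by
  simp only [ht, ascents, descents, List.tail_cons, List.zip_cons_cons, List.filter]
  rcases lt_trichotomy a b with h | rfl | h
  · simp [h, h.not_gt, Int.sign_eq_one_of_pos (sub_pos.2 h)]
    ring
  · simp
  · simp [h, h.not_gt, Int.sign_eq_neg_one_of_neg (sub_neg.2 h)]
    ring

lemma ht_append_cons (u v : List ℤ) (x : ℤ) : ht (u ++ x :: v) = ht (u ++ [x]) + ht (x :: v) := by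
  induction u with
  | nil => simp
  | cons a u ih =>
    cases u with
    | nil => simp [ht_cons_cons]
    | cons b u => simp only [List.cons_append, ht_cons_cons] at ih ⊢; rw [ih]; ring

lemma ht_reverse (l : List ℤ) : ht l.reverse = -ht l := by
  induction l with
  | nil => simp
  | cons a t ih =>
    cases t with
    | nil => simp
    | cons b t =>
      have hsign : (a - b).sign = -(b - a).sign := by rw [← Int.sign_neg, neg_sub]
      rw [List.reverse_cons, List.reverse_cons, List.append_assoc, List.singleton_append,
        ht_append_cons, ← List.reverse_cons, ih, ht_cons_cons, ht_cons_cons, hsign]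
      simp only [ht_singleton]
      ring

lemma ht_take_succ_add_ht_drop (l : List ℤ) {k : ℕ} (hk : k < l.length) :
    ht (l.take (k + 1)) + ht (l.drop k) = ht l := by
  conv_rhs => rw [← List.take_append_drop k l, List.drop_eq_getElem_cons hk, ht_append_cons,
    ← List.drop_eq_getElem_cons hk]
  rw [List.take_add_one, List.getElem?_eq_getElem hk, Option.toList_some]

lemma ht_map_of_strictMonoOn {f : ℤ → ℤ} {l : List ℤ} (hf : StrictMonoOn f {x | x ∈ l}) :
    ht (l.map f) = ht l := by
  induction l with
  | nil => rfl
  | cons a t ih =>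
    cases t with
    | nil => simp
    | cons b t =>
      have hsign : (f b - f a).sign = (b - a).sign := by
        have ha : a ∈ {x | x ∈ a :: b :: t} := by simp
        have hb : b ∈ {x | x ∈ a :: b :: t} := by simp
        rcases lt_trichotomy a b with h | rfl | h
        · rw [Int.sign_eq_one_of_pos (sub_pos.2 h), Int.sign_eq_one_of_pos (sub_pos.2 (hf ha hb h))]
        · simp
        · rw [Int.sign_eq_neg_one_of_neg (sub_neg.2 h),
            Int.sign_eq_neg_one_of_neg (sub_neg.2 (hf hb ha h))]
      have ih' := ih (hf.mono fun x hx => List.mem_cons_of_mem a hx)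
      rw [List.map_cons, List.map_cons, ht_cons_cons, ht_cons_cons, hsign, ← ih', List.map_cons]

lemma strictMonoOn_length_filter_lt {α : Type*} [Preorder α] [DecidableLT α] (l : List α) :
    StrictMonoOn (fun x => (l.filter fun y => decide (y < x)).length) {x | x ∈ l} := by
  intro x hx y _ hxy
  have hsub : (l.filter fun z => decide (z < x)).Sublist (l.filter fun z => decide (z < y)) :=
    List.monotone_filter_right l fun z hz => by
      simp only [decide_eq_true_eq] at hz ⊢
      exact hz.trans hxy
  refine hsub.length_le.lt_of_ne fun heq => ?_
  have hx' : x ∈ l.filter fun z => decide (z < x) := by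
    rw [hsub.eq_of_length heq]
    simpa using ⟨hx, hxy⟩
  simp at hx'

lemma ht_take_stdz (l : List ℤ) (k : ℕ) : ht ((stdz l).take k) = ht (l.take k) := by
  rw [stdz, ← List.map_take]
  refine ht_map_of_strictMonoOn fun x hx y hy hxy => ?_
  have := strictMonoOn_length_filter_lt l (List.take_subset k l hx) (List.take_subset k l hy) hxy
  simp only at this ⊢
  omega

lemma isBallot_stdz_iff (l : List ℤ) : IsBallot (stdz l) ↔ ∀ k, 0 ≤ ht (l.take k) := by
  simp only [IsBallot, ht_take_stdz]

lemma ht_take_reverse_append_of_le (ρ τ : List ℤ) {i : ℕ} (hi₀ : 1 ≤ i) (hi : i ≤ ρ.length) :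
    ht ((ρ.reverse ++ τ).take i) = ht (ρ.take (ρ.length - i + 1)) - ht ρ := by
  rw [List.take_append_of_le_length (by simpa using hi), List.take_reverse, ht_reverse,
    ← ht_take_succ_add_ht_drop ρ (k := ρ.length - i) (by omega)]
  ring

lemma ht_take_reverse_append_cons (ρ τ : List ℤ) (t : ℤ) (j : ℕ) :
    ht ((ρ.reverse ++ t :: τ).take (ρ.length + (j + 1))) =
      ht ((t :: τ).take (j + 1)) - ht (t :: ρ) := by
  rw [← List.length_reverse, List.take_length_add_append, List.take_succ_cons, ht_append_cons,
    ← List.reverse_cons, ht_reverse]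
  ring

theorem first_lowest_position_general (n l : ℕ) (ρ τ : List ℤ)
    (hlen : ρ.length = l) (hl : 1 ≤ l) (hτ : τ ≠ [])
    (hρb : IsBallot (stdz ρ)) (hτb : IsBallot (stdz τ))
    (hheads : τ.headI < ρ.headI) :
    (∀ i : ℕ, 1 ≤ i → i ≤ n →
        ht ((ρ.reverse ++ τ).take (l + 1)) ≤ ht ((ρ.reverse ++ τ).take i)) ∧
    (∀ i : ℕ, 1 ≤ i → i < l + 1 →
        ht ((ρ.reverse ++ τ).take (l + 1)) < ht ((ρ.reverse ++ τ).take i)) := by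
  subst hlen
  have hρ_prefix := (isBallot_stdz_iff ρ).1 hρb
  have hτ_prefix := (isBallot_stdz_iff τ).1 hτb
  obtain ⟨t, τ, rfl⟩ := List.exists_cons_of_ne_nil hτ
  obtain ⟨r, ρ', rfl⟩ := List.exists_cons_of_ne_nil (List.ne_nil_of_length_pos hl)
  set ρ := r :: ρ'
  have hdescent : ht (t :: ρ) = 1 + ht ρ := by
    have hrt : 0 < r - t := sub_pos.2 hheads
    rw [ht_cons_cons, Int.sign_eq_one_of_pos hrt]
  have hlowest : ht ((ρ.reverse ++ t :: τ).take (ρ.length + 1)) = -1 - ht ρ := by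
    rw [ht_take_reverse_append_cons ρ τ t 0, hdescent, List.take_succ_cons, List.take_zero,
      ht_singleton]
    ring
  have hbefore : ∀ i, 1 ≤ i → i ≤ ρ.length → -ht ρ ≤ ht ((ρ.reverse ++ t :: τ).take i) := by
    intro i hi₀ hi
    linarith [ht_take_reverse_append_of_le ρ (t :: τ) hi₀ hi, hρ_prefix (ρ.length - i + 1)]
  refine ⟨fun i hi₀ _ => ?_, fun i hi₀ hi => ?_⟩
  · rcases le_or_gt i ρ.length with hi | hi
    · linarith [hbefore i hi₀ hi]
    · obtain ⟨j, rfl⟩ : ∃ j, i = ρ.length + (j + 1) := ⟨i - ρ.length - 1, by omega⟩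
      linarith [ht_take_reverse_append_cons ρ τ t j, hτ_prefix (j + 1)]
  · linarith [hbefore i hi₀ (by omega)]

/-- If std(ρ), std(τ) are ballot, ρτ is a permutation of {1,…,n}, ρ has length l ≥ 1,
τ is nonempty and ρ₁ > τ₁, then l+1 is the first lowest position of π = ρʳτ. -/
theorem first_lowest_position (n l : ℕ) (ρ τ : List ℤ)
    (hlen : ρ.length = l) (hl : 1 ≤ l) (hτ : τ ≠ [])
    (hρb : IsBallot (stdz ρ)) (hτb : IsBallot (stdz τ))
    (hperm : (ρ ++ τ).Perm (baseList n))
    (hheads : τ.headI < ρ.headI) :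
    (∀ i : ℕ, 1 ≤ i → i ≤ n →
        ht ((ρ.reverse ++ τ).take (l + 1)) ≤ ht ((ρ.reverse ++ τ).take i)) ∧
    (∀ i : ℕ, 1 ≤ i → i < l + 1 →
        ht ((ρ.reverse ++ τ).take (l + 1)) < ht ((ρ.reverse ++ τ).take i)) :=
  first_lowest_position_general n l ρ τ hlen hl hτ hρb hτb hheads
end

section
/- For words ρ, τ on distinct integers with ρτ a permutation of {1,…,n}, the number of peaks of the concatenation ρʳτ, when position |ρ| or |ρ|+1 is a lowest position of ρʳτ as in the reversal-concatenation setup (std(ρ), std(τ) ballot), satisfies pk(ρʳτ) = pk(ρ) + pk(τ). -/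
open scoped Classical

/-! Standardization preserves the relative order of the letters, and a ballot word cannot begin
with a descent (that prefix would have height −1). Hence ρ and τ both begin weakly upwards, so
ρʳ ends weakly downwards: neither letter at the junction of ρʳτ can be a peak, the peaks of ρʳτ
are those of ρʳ plus those of τ, and pk(ρʳ) = pk(ρ). -/

theorem peaks_cons_cons_cons (x y z : ℤ) (t : List ℤ) :
    peaks (x :: y :: z :: t) = (if x < y ∧ z < y then 1 else 0) + peaks (y :: z :: t) := by
  simp only [peaks, List.tail_cons, List.zip_cons_cons, List.filter_cons]
  split_ifs <;> simp_all
  omega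

theorem peaks_cons (x : ℤ) (l : List ℤ) :
    peaks (x :: l) = peaks (x :: l.take 2) + peaks l := by
  rcases l with _ | ⟨y, _ | ⟨z, t⟩⟩
  · rfl
  · rfl
  · rw [List.take_succ_cons, List.take_succ_cons, List.take_zero, peaks_cons_cons_cons,
      peaks_cons_cons_cons]
    rfl

theorem peaks_append_cons_cons_singleton (l : List ℤ) (a b x : ℤ) :
    peaks (l ++ [a, b, x]) = peaks (l ++ [a, b]) + if a < b ∧ x < b then 1 else 0 := by
  induction l with
  | nil => rw [List.nil_append, List.nil_append, peaks_cons_cons_cons, add_comm]; rfl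
  | cons y l ih =>
    have htake : (l ++ [a, b, x]).take 2 = (l ++ [a, b]).take 2 := by
      rw [show l ++ [a, b, x] = l ++ [a, b] ++ [x] by simp]
      exact List.take_append_of_le_length (by simp)
    rw [List.cons_append, List.cons_append, peaks_cons y, peaks_cons y (l ++ [a, b]), ih, htake]
    omega

theorem peaks_reverse : ∀ l : List ℤ, peaks l.reverse = peaks l
  | [] => rfl
  | [_] => rfl
  | [_, _] => rfl
  | x :: y :: z :: t => by
    have hrev : (x :: y :: z :: t).reverse = t.reverse ++ [z, y, x] := by simp
    have hrev' : (y :: z :: t).reverse = t.reverse ++ [z, y] := by simp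
    rw [hrev, peaks_append_cons_cons_singleton, ← hrev', peaks_reverse (y :: z :: t),
      peaks_cons_cons_cons]
    simp only [and_comm (a := z < y)]
    omega

theorem peaks_append {a b : List ℤ} (ha : ∀ t x y, a = t ++ [x, y] → y ≤ x)
    (hb : ∀ x y t, b = x :: y :: t → x ≤ y) :
    peaks (a ++ b) = peaks a + peaks b := by
  induction a with
  | nil => exact (zero_add _).symm
  | cons x a ih =>
    have ha' : ∀ t u v, a = t ++ [u, v] → v ≤ u :=
      fun t u v h => ha (x :: t) u v (by rw [h]; rfl)
    have hjunction : peaks (x :: (a ++ b).take 2) = peaks (x :: a.take 2) := by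
      rcases a with _ | ⟨u, _ | ⟨v, s⟩⟩
      · rcases b with _ | ⟨y, _ | ⟨z, t⟩⟩
        · rfl
        · rfl
        · show peaks [x, y, z] = peaks [x]
          rw [peaks_cons_cons_cons, if_neg fun h => (hb y z t rfl).not_gt h.2]
          rfl
      · rcases b with _ | ⟨y, t⟩
        · rfl
        · show peaks [x, u, y] = peaks [x, u]
          rw [peaks_cons_cons_cons, if_neg fun h => (ha [] x u rfl).not_gt h.1]
          rfl
      · rfl
    rw [List.cons_append, peaks_cons, ih ha', hjunction, peaks_cons x a, add_assoc]

theorem peaks_reverse_append {a b : List ℤ} (ha : ∀ x y t, a = x :: y :: t → x ≤ y)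
    (hb : ∀ x y t, b = x :: y :: t → x ≤ y) :
    peaks (a.reverse ++ b) = peaks a + peaks b := by
  refine (peaks_append (fun t x y h => ha y x t.reverse ?_) hb).trans (by rw [peaks_reverse])
  rw [← List.reverse_reverse a, h]
  simp

theorem length_filter_lt_lt_of_mem {l : List ℤ} {v w : ℤ} (hv : v ∈ l) (hvw : v < w) :
    (l.filter (· < v)).length < (l.filter (· < w)).length := by
  have hsub : (l.filter (· < v)).Sublist (l.filter (· < w)) :=
    List.monotone_filter_right l fun y hy => by simp only [decide_eq_true_eq] at hy ⊢; omega
  refine hsub.length_le.lt_of_ne fun heq => ?_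
  have hmem : v ∈ l.filter (· < w) := by simp [hv, hvw]
  rw [← hsub.eq_of_length heq] at hmem
  simp at hmem

theorem ht_pair_of_lt {a b : ℤ} (h : b < a) : ht [a, b] = -1 := by
  simp [ht, ascents, descents, h, h.not_gt]

theorem le_of_isBallot_stdz {x y : ℤ} {t : List ℤ} (h : IsBallot (stdz (x :: y :: t))) :
    x ≤ y := by
  by_contra! hyx
  have hrank := length_filter_lt_lt_of_mem (l := x :: y :: t) (by simp) hyx
  have hht := h 2
  simp only [stdz, List.map_cons, List.take_succ_cons, List.take_zero] at hht
  rw [ht_pair_of_lt (by omega)] at hht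
  omega

theorem peaks_reversal_concatenation_general (ρ τ : List ℤ)
    (hρb : IsBallot (stdz ρ)) (hτb : IsBallot (stdz τ)) :
    peaks (ρ.reverse ++ τ) = peaks ρ + peaks τ :=
  peaks_reverse_append (fun _ _ _ h => le_of_isBallot_stdz (h ▸ hρb))
    (fun _ _ _ h => le_of_isBallot_stdz (h ▸ hτb))

/-- In the reversal-concatenation setup, pk(ρʳτ) = pk(ρ) + pk(τ). -/
theorem peaks_reversal_concatenation (n : ℕ) (ρ τ : List ℤ)
    (hρb : IsBallot (stdz ρ)) (hτb : IsBallot (stdz τ))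
    (hperm : (ρ ++ τ).Perm (baseList n)) :
    peaks (ρ.reverse ++ τ) = peaks ρ + peaks τ :=
  peaks_reversal_concatenation_general ρ τ hρb hτb
end
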